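/- arXiv:1904.13056 — 5 statements merged into one kernel-verified Lean document; each statement's English description precedes it below -/
import Mathlib

section
/- (Vazirani's Lemma) Let ε > 0 and let Z be a random variable taking values in {0,1}^m. If for every non-empty set S ⊆ [m] it holds that bias(⊕_{i∈S} Z_i) ≤ ε·(2m)^{-|S|}, then for every z ∈ {0,1}^m, (1-ε)·2^{-m} ≤ Pr[Z = z] ≤ (1+ε)·2^{-m}. -/
open Finset
open scoped Classical

/-!
Fourier analysis on the cube. With the Walsh characters `χ_S(w) = (-1)^{#{i ∈ S | w i}}` and the
Fourier coefficients `μ̂(S) = ∑_w μ(w) χ_S(w)`, the coefficient `μ̂(S)` is exactly the bias of the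
XOR over `S`, `μ̂(∅) = 1`, and inversion gives `2^m μ(z) = ∑_S χ_S(z) μ̂(S)`. Hence
`|2^m μ(z) - 1| ≤ ∑_{S ≠ ∅} |μ̂(S)| ≤ ε ∑_{S ≠ ∅} (2m)^{-|S|} = ε ((1 + 1/(2m))^m - 1)`,
which is at most `ε (√e - 1) ≤ ε`.
-/

namespace BooleanCube

variable {ι : Type*}

noncomputable def walsh (S : Finset ι) (w : ι → Bool) : ℝ :=
  ∏ i ∈ S, if w i then -1 else 1

lemma walsh_eq_neg_one_pow (S : Finset ι) (w : ι → Bool) :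
    walsh S w = (-1) ^ (S.filter (fun i => w i = true)).card := by
  simp [walsh, prod_ite]

lemma abs_walsh (S : Finset ι) (w : ι → Bool) : |walsh S w| = 1 := by
  simp [walsh_eq_neg_one_pow]

lemma walsh_eq_ite (S : Finset ι) (w : ι → Bool) :
    walsh S w = if (S.filter (fun i => w i = true)).card % 2 = 0 then 1 else -1 := by
  rw [walsh_eq_neg_one_pow, neg_one_pow_eq_pow_mod_two]
  rcases Nat.mod_two_eq_zero_or_one (S.filter (fun i => w i = true)).card with h | h <;> simp [h]

variable [Fintype ι]

lemma sum_walsh_mul_walsh (z w : ι → Bool) :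
    ∑ S, walsh S z * walsh S w = if w = z then 2 ^ Fintype.card ι else 0 := by
  have hfactor : ∀ i, 1 + (if z i then (-1 : ℝ) else 1) * (if w i then -1 else 1)
      = if w i = z i then 2 else 0 := by
    intro i
    cases z i <;> cases w i <;> norm_num
  simp_rw [walsh, ← prod_mul_distrib]
  rw [← powerset_univ, ← prod_one_add, prod_congr rfl fun i _ => hfactor i]
  split_ifs with h
  · simp [h]
  · obtain ⟨i, hi⟩ := Function.ne_iff.mp h
    exact prod_eq_zero (mem_univ i) (if_neg hi)

variable [DecidableEq ι]

noncomputable def fourierCoeff (μ : (ι → Bool) → ℝ) (S : Finset ι) : ℝ :=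
  ∑ w, μ w * walsh S w

lemma sum_walsh_mul_fourierCoeff (μ : (ι → Bool) → ℝ) (z : ι → Bool) :
    ∑ S, walsh S z * fourierCoeff μ S = 2 ^ Fintype.card ι * μ z := by
  calc ∑ S, walsh S z * fourierCoeff μ S
      = ∑ w, μ w * ∑ S, walsh S z * walsh S w := by
        simp_rw [fourierCoeff, mul_sum]
        rw [sum_comm]
        refine sum_congr rfl fun w _ => sum_congr rfl fun S _ => by ring
    _ = 2 ^ Fintype.card ι * μ z := by
        simp_rw [sum_walsh_mul_walsh, mul_ite, mul_zero, sum_ite_eq', if_pos (mem_univ z)]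
        ring

lemma fourierCoeff_empty (μ : (ι → Bool) → ℝ) : fourierCoeff μ ∅ = ∑ w, μ w := by
  simp [fourierCoeff, walsh]

lemma fourierCoeff_eq_sub (μ : (ι → Bool) → ℝ) (S : Finset ι) :
    fourierCoeff μ S =
      (∑ w ∈ univ.filter (fun w => (S.filter (fun i => w i = true)).card % 2 = 0), μ w)
        - ∑ w ∈ univ.filter (fun w => (S.filter (fun i => w i = true)).card % 2 = 1), μ w := by
  simp_rw [fourierCoeff, walsh_eq_ite, mul_ite, mul_neg, sum_ite, sum_neg_distrib,
    Nat.mod_two_ne_zero, mul_one, ← sub_eq_add_neg]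

lemma abs_two_pow_mul_sub_sum_le (μ : (ι → Bool) → ℝ) (z : ι → Bool) :
    |2 ^ Fintype.card ι * μ z - ∑ w, μ w|
      ≤ ∑ S ∈ (univ : Finset (Finset ι)).erase ∅, |fourierCoeff μ S| := by
  have hsplit : 2 ^ Fintype.card ι * μ z - ∑ w, μ w
      = ∑ S ∈ (univ : Finset (Finset ι)).erase ∅, walsh S z * fourierCoeff μ S := by
    rw [← sum_walsh_mul_fourierCoeff, ← add_sum_erase _ _ (mem_univ ∅), fourierCoeff_empty]
    simp [walsh]
  rw [hsplit]
  refine (abs_sum_le_sum_abs _ _).trans (sum_le_sum fun S _ => ?_)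
  rw [abs_mul, abs_walsh, one_mul]

end BooleanCube

lemma one_add_inv_two_mul_pow_le_two (n : ℕ) : (1 + (2 * n : ℝ)⁻¹) ^ n ≤ 2 := by
  have hexp_half : Real.exp (1 / 2) ≤ 2 := by
    have hsq : Real.exp (1 / 2) ^ 2 = Real.exp 1 := by
      rw [← Real.exp_nat_mul]; norm_num
    nlinarith [Real.exp_one_lt_d9, Real.exp_pos (1 / 2)]
  have hmul : (n : ℝ) * (2 * n : ℝ)⁻¹ ≤ 1 / 2 := by
    rcases n.eq_zero_or_pos with rfl | hn
    · norm_num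
    · rw [mul_inv, ← mul_assoc, mul_comm (n : ℝ), mul_assoc, mul_inv_cancel₀ (by positivity)]
      norm_num
  calc (1 + (2 * n : ℝ)⁻¹) ^ n ≤ Real.exp ((2 * n : ℝ)⁻¹) ^ n := by
        gcongr
        linarith [Real.add_one_le_exp (2 * n : ℝ)⁻¹]
    _ = Real.exp (n * (2 * n : ℝ)⁻¹) := (Real.exp_nat_mul _ n).symm
    _ ≤ 2 := (Real.exp_le_exp.mpr hmul).trans hexp_half

lemma sum_erase_empty_zpow_neg_card_le_one (ι : Type*) [Fintype ι] [DecidableEq ι] :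
    ∑ S ∈ (univ : Finset (Finset ι)).erase ∅, (2 * Fintype.card ι : ℝ) ^ (-(S.card : ℤ)) ≤ 1 := by
  have htotal : ∑ S : Finset ι, (2 * Fintype.card ι : ℝ) ^ (-(S.card : ℤ))
      = (1 + (2 * Fintype.card ι : ℝ)⁻¹) ^ Fintype.card ι := by
    simp_rw [zpow_neg, zpow_natCast, ← inv_pow]
    rw [add_comm, ← Fintype.sum_pow_mul_eq_add_pow]
    simp
  have := one_add_inv_two_mul_pow_le_two (Fintype.card ι)
  rw [← htotal, ← add_sum_erase _ _ (mem_univ ∅)] at this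
  simp only [card_empty, CharP.cast_eq_zero, neg_zero, zpow_zero] at this
  linarith

theorem stmt_1_general (m : ℕ) (ε : ℝ) (hε : 0 < ε) (μ : (Fin m → Bool) → ℝ)
    (hsum : ∑ z, μ z = 1)
    (hbias : ∀ S : Finset (Fin m), S.Nonempty →
      |(∑ z ∈ univ.filter (fun z => (S.filter (fun i => z i = true)).card % 2 = 0), μ z)
        - ∑ z ∈ univ.filter (fun z => (S.filter (fun i => z i = true)).card % 2 = 1), μ z|
        ≤ ε * ((2 * m : ℝ)) ^ (-(S.card : ℤ))) :
    ∀ z, (1 - ε) * (1 / 2 ^ m) ≤ μ z ∧ μ z ≤ (1 + ε) * (1 / 2 ^ m) := by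
  intro z
  have hclose : |2 ^ m * μ z - 1| ≤ ε := by
    have hsum_le := sum_erase_empty_zpow_neg_card_le_one (Fin m)
    rw [Fintype.card_fin] at hsum_le
    calc |2 ^ m * μ z - 1|
        ≤ ∑ S ∈ (univ : Finset (Finset (Fin m))).erase ∅, |BooleanCube.fourierCoeff μ S| := by
          simpa only [hsum, Fintype.card_fin] using BooleanCube.abs_two_pow_mul_sub_sum_le μ z
      _ ≤ ∑ S ∈ (univ : Finset (Finset (Fin m))).erase ∅, ε * (2 * m : ℝ) ^ (-(S.card : ℤ)) := by
          refine sum_le_sum fun S hS => ?_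
          rw [BooleanCube.fourierCoeff_eq_sub]
          exact hbias S (nonempty_of_ne_empty (ne_of_mem_erase hS))
      _ = ε * ∑ S ∈ (univ : Finset (Finset (Fin m))).erase ∅, (2 * m : ℝ) ^ (-(S.card : ℤ)) :=
          (mul_sum _ _ _).symm
      _ ≤ ε := mul_le_of_le_one_right hε.le hsum_le
  have h2m : (0 : ℝ) < 2 ^ m := by positivity
  rw [abs_le] at hclose
  rw [mul_one_div, mul_one_div, div_le_iff₀ h2m, le_div_iff₀ h2m]
  constructor <;> linarith [hclose.1, hclose.2]

/-- Vazirani's lemma: small biases of all XORs imply near-uniformity. -/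
theorem stmt_1 (m : ℕ) (ε : ℝ) (hε : 0 < ε) (μ : (Fin m → Bool) → ℝ)
    (hnn : ∀ z, 0 ≤ μ z) (hsum : ∑ z, μ z = 1)
    (hbias : ∀ S : Finset (Fin m), S.Nonempty →
      |(∑ z ∈ univ.filter (fun z => (S.filter (fun i => z i = true)).card % 2 = 0), μ z)
        - ∑ z ∈ univ.filter (fun z => (S.filter (fun i => z i = true)).card % 2 = 1), μ z|
        ≤ ε * ((2 * m : ℝ)) ^ (-(S.card : ℤ))) :
    ∀ z, (1 - ε) * (1 / 2 ^ m) ≤ μ z ∧ μ z ≤ (1 + ε) * (1 / 2 ^ m) :=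
  stmt_1_general m ε hε μ hsum hbias
end

section
/- (Extractor property of low-discrepancy gadgets) Let Λ be a finite set, g : Λ × Λ → {0,1} a function with disc(g) ≤ |Λ|^{-η}, and let X, Y be independent random variables taking values in Λ with H_∞(X) + H_∞(Y) ≥ (2 - η + λ)·log₂|Λ|. Then bias(g(X,Y)) ≤ |Λ|^{-λ}. -/
/-!
The bias of `g(X,Y)` is the absolute value of the bilinear form `∑ μX x μY y (-1)^g(x,y)`.
A linear functional `∑ u x f x` over the box `0 ≤ u ≤ p` is extremal at a vertex, i.e. at
`p` times an indicator; applying this first in `x` and then in `y` bounds the bias by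
`2^(-kX) 2^(-kY)` times the largest rectangle sum, which is `|Λ|^2 disc(g) ≤ |Λ|^(2-η)`.
The entropy hypothesis makes `2^(-kX-kY) |Λ|^(2-η) ≤ |Λ|^(-λ)`.
-/

open Finset
open scoped Classical

section BoxFunctional

variable {α : Type*} [Fintype α]

theorem sum_mul_le_mul_of_forall_sum_le (u f : α → ℝ) {p C : ℝ} (hp : 0 ≤ p)
    (hu : ∀ x, 0 ≤ u x) (hup : ∀ x, u x ≤ p) (hf : ∀ A : Finset α, ∑ x ∈ A, f x ≤ C) :
    ∑ x, u x * f x ≤ p * C :=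
  calc ∑ x, u x * f x ≤ ∑ x, p * if 0 ≤ f x then f x else 0 :=
        sum_le_sum fun x _ => by split_ifs <;> nlinarith [hu x, hup x]
    _ = p * ∑ x ∈ univ.filter (0 ≤ f ·), f x := by rw [← mul_sum, sum_filter]
    _ ≤ p * C := mul_le_mul_of_nonneg_left (hf _) hp

theorem abs_sum_mul_le_mul_of_forall_abs_sum_le (u f : α → ℝ) {p C : ℝ} (hp : 0 ≤ p)
    (hu : ∀ x, 0 ≤ u x) (hup : ∀ x, u x ≤ p) (hf : ∀ A : Finset α, |∑ x ∈ A, f x| ≤ C) :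
    |∑ x, u x * f x| ≤ p * C := by
  have upper := sum_mul_le_mul_of_forall_sum_le u f hp hu hup fun A => (abs_le.mp (hf A)).2
  have lower := sum_mul_le_mul_of_forall_sum_le u (-f ·) hp hu hup fun A => by
    rw [sum_neg_distrib]; exact (neg_le.mpr (abs_le.mp (hf A)).1)
  simp only [mul_neg, sum_neg_distrib] at lower
  exact abs_le.mpr ⟨by linarith, upper⟩

end BoxFunctional

theorem abs_sum_sum_mul_mul_le_of_forall_rectangle {α β : Type*} [Fintype α] [Fintype β]
    (u : α → ℝ) (v : β → ℝ) (ε : α → β → ℝ) {p q C : ℝ} (hp : 0 ≤ p) (hq : 0 ≤ q)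
    (hu : ∀ x, 0 ≤ u x) (hup : ∀ x, u x ≤ p) (hv : ∀ y, 0 ≤ v y) (hvq : ∀ y, v y ≤ q)
    (hrect : ∀ (A : Finset α) (B : Finset β), |∑ x ∈ A, ∑ y ∈ B, ε x y| ≤ C) :
    |∑ x, ∑ y, u x * v y * ε x y| ≤ p * (q * C) := by
  simp_rw [mul_assoc, ← mul_sum]
  refine abs_sum_mul_le_mul_of_forall_abs_sum_le _ _ hp hu hup fun A => ?_
  rw [sum_comm]
  simp_rw [← mul_sum]
  refine abs_sum_mul_le_mul_of_forall_abs_sum_le _ _ hq hv hvq fun B => ?_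
  rw [sum_comm]
  exact hrect A B

def boolSign (b : Bool) : ℝ := if b then -1 else 1

theorem sum_boolSign_eq_card_sub_card {γ : Type*} (s : Finset γ) (b : γ → Bool) :
    ∑ z ∈ s, boolSign (b z) =
      ((s.filter (b · = false)).card : ℝ) - ((s.filter (b · = true)).card : ℝ) := by
  simp only [boolSign, sum_ite, sum_const, nsmul_eq_mul, Bool.not_eq_true]
  ring

theorem two_rpow_neg_le_rpow_neg {N c k : ℝ} (hN : 0 < N) (hk : c * Real.logb 2 N ≤ k) :
    (2 : ℝ) ^ (-k) ≤ N ^ (-c) := by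
  rw [← Real.rpow_logb two_pos (by norm_num) hN, ← Real.rpow_mul two_pos.le]
  exact Real.rpow_le_rpow_of_exponent_le one_le_two (by linarith)

theorem stmt_7_general {Λ : Type*} [Fintype Λ] [Nonempty Λ] (η lam : ℝ)
    (g : Λ → Λ → Bool)
    (hdisc : ∀ A B : Finset Λ,
      |(((A ×ˢ B).filter (fun p => g p.1 p.2 = false)).card : ℝ)
          - (((A ×ˢ B).filter (fun p => g p.1 p.2 = true)).card : ℝ)|
        / ((Fintype.card Λ : ℝ) ^ 2)
        ≤ (Fintype.card Λ : ℝ) ^ (-η))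
    (μX μY : Λ → ℝ) (hX0 : ∀ x, 0 ≤ μX x)
    (hY0 : ∀ y, 0 ≤ μY y)
    (kX kY : ℝ) (hkX : ∀ x, μX x ≤ (2 : ℝ) ^ (-kX)) (hkY : ∀ y, μY y ≤ (2 : ℝ) ^ (-kY))
    (hk : (2 - η + lam) * Real.logb 2 (Fintype.card Λ) ≤ kX + kY) :
    |(∑ x, ∑ y, if g x y = false then μX x * μY y else 0)
      - ∑ x, ∑ y, if g x y = true then μX x * μY y else 0|
      ≤ (Fintype.card Λ : ℝ) ^ (-lam) := by
  set N : ℝ := (Fintype.card Λ : ℝ)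
  have hN : 0 < N := Nat.cast_pos.mpr Fintype.card_pos
  have hrect : ∀ A B : Finset Λ, |∑ x ∈ A, ∑ y ∈ B, boolSign (g x y)| ≤ N ^ (-η) * N ^ 2 := by
    intro A B
    rw [← sum_product' (f := fun x y => boolSign (g x y)), sum_boolSign_eq_card_sub_card,
      ← div_le_iff₀ (by positivity)]
    exact hdisc A B
  have hbias : ((∑ x, ∑ y, if g x y = false then μX x * μY y else 0)
      - ∑ x, ∑ y, if g x y = true then μX x * μY y else 0)
      = ∑ x, ∑ y, μX x * μY y * boolSign (g x y) := by
    simp_rw [← sum_sub_distrib]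
    refine sum_congr rfl fun x _ => sum_congr rfl fun y _ => ?_
    cases g x y <;> simp [boolSign]
  rw [hbias]
  calc _ ≤ 2 ^ (-kX) * (2 ^ (-kY) * (N ^ (-η) * N ^ 2)) :=
        abs_sum_sum_mul_mul_le_of_forall_rectangle _ _ _ (by positivity) (by positivity)
          hX0 hkX hY0 hkY hrect
    _ = 2 ^ (-(kX + kY)) * (N ^ (-η) * N ^ 2) := by
        rw [neg_add, Real.rpow_add two_pos, mul_assoc]
    _ ≤ N ^ (-(2 - η + lam)) * (N ^ (-η) * N ^ 2) := by
        gcongr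
        exact two_rpow_neg_le_rpow_neg hN hk
    _ = N ^ (-lam) := by
        rw [← Real.rpow_natCast, ← Real.rpow_add hN, ← Real.rpow_add hN]
        congr 1
        push_cast
        ring

/-- Extractor property of low-discrepancy gadgets: if `disc(g) ≤ |Λ|^(-η)` and
`H_∞(X) + H_∞(Y) ≥ (2 - η + λ)·log₂|Λ|`, then `bias(g(X,Y)) ≤ |Λ|^(-λ)`. -/
theorem stmt_7 {Λ : Type*} [Fintype Λ] [Nonempty Λ] (η lam : ℝ) (hη : 0 < η) (hlam : 0 < lam)
    (g : Λ → Λ → Bool)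
    (hdisc : ∀ A B : Finset Λ,
      |(((A ×ˢ B).filter (fun p => g p.1 p.2 = false)).card : ℝ)
          - (((A ×ˢ B).filter (fun p => g p.1 p.2 = true)).card : ℝ)|
        / ((Fintype.card Λ : ℝ) ^ 2)
        ≤ (Fintype.card Λ : ℝ) ^ (-η))
    (μX μY : Λ → ℝ) (hX0 : ∀ x, 0 ≤ μX x) (hX1 : ∑ x, μX x = 1)
    (hY0 : ∀ y, 0 ≤ μY y) (hY1 : ∑ y, μY y = 1)
    (kX kY : ℝ) (hkX : ∀ x, μX x ≤ (2 : ℝ) ^ (-kX)) (hkY : ∀ y, μY y ≤ (2 : ℝ) ^ (-kY))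
    (hk : (2 - η + lam) * Real.logb 2 (Fintype.card Λ) ≤ kX + kY) :
    |(∑ x, ∑ y, if g x y = false then μX x * μY y else 0)
      - ∑ x, ∑ y, if g x y = true then μX x * μY y else 0|
      ≤ (Fintype.card Λ : ℝ) ^ (-lam) :=
  stmt_7_general η lam g hdisc μX μY hX0 hY0 kX kY hkX hkY hk
end

section
/- (Density-restoring fixing) Let X be a random variable taking values in Λ^n for a finite alphabet Λ with |Λ| = 2^b, let δ > 0, and let I ⊆ [n] be a maximal subset of coordinates such that H_∞(X_I) < δ·b·|I|. Let x_I ∈ Λ^I be a value with Pr[X_I = x_I] > 2^{-δ·b·|I|}. Then the random variable X_{[n]∖I} conditioned on X_I = x_I is δ-dense, i.e., for every J ⊆ [n]∖I, H_∞(X_J | X_I = x_I) ≥ δ·b·|J|. -/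
open Finset
open scoped Classical

/-
Fixing the coordinates of `J` on top of the maximal set `I` gives a cylinder on `I ∪ J`,
a strict superset of `I`, so by maximality its mass is at most `2^{-δb(|I|+|J|)}`; dividing
by `Pr[X_I = x_I] > 2^{-δb|I|}` leaves at most `2^{-δb|J|}`.
-/

theorem Finset.forall_mem_union_eq_piecewise_iff {ι α : Type*} [DecidableEq ι] {I J : Finset ι}
    (hJI : Disjoint J I) (z x y : ι → α) :
    (∀ i ∈ J ∪ I, z i = J.piecewise x y i) ↔ (∀ i ∈ J, z i = x i) ∧ ∀ i ∈ I, z i = y i := by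
  simp only [mem_union, or_imp, forall_and]
  refine and_congr (forall₂_congr fun i hi => ?_) (forall₂_congr fun i hi => ?_)
  · rw [piecewise_eq_of_mem _ _ _ hi]
  · rw [piecewise_eq_of_notMem _ _ _ (disjoint_right.mp hJI hi)]

theorem Real.rpow_neg_mul_card_union {ι : Type*} [DecidableEq ι] {I J : Finset ι}
    (hJI : Disjoint J I) {a : ℝ} (ha : 0 < a) (c : ℝ) :
    a ^ (-(c * (J ∪ I).card)) = a ^ (-(c * J.card)) * a ^ (-(c * I.card)) := by
  rw [card_union_of_disjoint hJI, ← Real.rpow_add ha]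
  push_cast
  ring_nf

theorem stmt_9_general (n b : ℕ) {Λ : Type*} [Fintype Λ] [DecidableEq Λ]
    (μ : (Fin n → Λ) → ℝ)
    (δ : ℝ) (I : Finset (Fin n))
    (hmax : ∀ I' : Finset (Fin n), I ⊂ I' →
      ∀ x : Fin n → Λ,
        ∑ z ∈ univ.filter (fun z => ∀ i ∈ I', z i = x i), μ z
          ≤ (2 : ℝ) ^ (-(δ * b * I'.card)))
    (xI : Fin n → Λ)
    (hxI : (2 : ℝ) ^ (-(δ * b * I.card))
        < ∑ z ∈ univ.filter (fun z => ∀ i ∈ I, z i = xI i), μ z) :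
    ∀ J : Finset (Fin n), Disjoint J I → ∀ x : Fin n → Λ,
      (∑ z ∈ univ.filter (fun z => (∀ i ∈ J, z i = x i) ∧ ∀ i ∈ I, z i = xI i), μ z)
          / (∑ z ∈ univ.filter (fun z => ∀ i ∈ I, z i = xI i), μ z)
        ≤ (2 : ℝ) ^ (-(δ * b * J.card)) := by
  intro J hJI x
  have hpos : 0 < ∑ z ∈ univ.filter (fun z => ∀ i ∈ I, z i = xI i), μ z :=
    (Real.rpow_pos_of_pos two_pos _).trans hxI
  rcases J.eq_empty_or_nonempty with rfl | hJ
  · simp [div_self hpos.ne']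
  have hI : I ⊂ J ∪ I := right_lt_sup.mpr fun hJI' => hJ.ne_empty (hJI.eq_bot_of_le hJI')
  rw [div_le_iff₀ hpos, ← filter_congr fun z _ => forall_mem_union_eq_piecewise_iff hJI z x xI]
  calc _ ≤ (2 : ℝ) ^ (-(δ * b * (J ∪ I).card)) := hmax _ hI _
    _ = (2 : ℝ) ^ (-(δ * b * J.card)) * (2 : ℝ) ^ (-(δ * b * I.card)) :=
      Real.rpow_neg_mul_card_union hJI two_pos _
    _ ≤ _ := by gcongr

/-- Density-restoring fixing: if `I` is a maximal set of coordinates violating `δ`-density and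
`x_I` is a heavy value of `X_I`, then `X_{[n]∖I}` conditioned on `X_I = x_I` is `δ`-dense. -/
theorem stmt_9 (n b : ℕ) {Λ : Type*} [Fintype Λ] [DecidableEq Λ]
    (hcard : Fintype.card Λ = 2 ^ b)
    (μ : (Fin n → Λ) → ℝ) (hnn : ∀ z, 0 ≤ μ z) (hsum : ∑ z, μ z = 1)
    (δ : ℝ) (hδ : 0 < δ) (I : Finset (Fin n))
    (hmax : ∀ I' : Finset (Fin n), I ⊂ I' →
      ∀ x : Fin n → Λ,
        ∑ z ∈ univ.filter (fun z => ∀ i ∈ I', z i = x i), μ z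
          ≤ (2 : ℝ) ^ (-(δ * b * I'.card)))
    (xI : Fin n → Λ)
    (hxI : (2 : ℝ) ^ (-(δ * b * I.card))
        < ∑ z ∈ univ.filter (fun z => ∀ i ∈ I, z i = xI i), μ z) :
    ∀ J : Finset (Fin n), Disjoint J I → ∀ x : Fin n → Λ,
      (∑ z ∈ univ.filter (fun z => (∀ i ∈ J, z i = x i) ∧ ∀ i ∈ I, z i = xI i), μ z)
          / (∑ z ∈ univ.filter (fun z => ∀ i ∈ I, z i = xI i), μ z)
        ≤ (2 : ℝ) ^ (-(δ * b * J.card)) :=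
  stmt_9_general n b μ δ I hmax xI hxI
end

section
/- (Density-restoring partition) Let X be a random variable with support 𝒳 ⊆ Λ^n where |Λ| = 2^b, and let δ > 0. Then there is a partition 𝒳 = 𝒳¹ ∪ ⋯ ∪ 𝒳^ℓ where each 𝒳^j is associated with a set I_j ⊆ [n] and a value x_j ∈ Λ^{I_j} such that: (1) X_{I_j} conditioned on X ∈ 𝒳^j is fixed to x_j; (2) X_{[n]∖I_j} conditioned on X ∈ 𝒳^j is δ-dense; and (3) with p_{≥j} = Pr[X ∈ 𝒳^j ∪ ⋯ ∪ 𝒳^ℓ], it holds that H_∞(X_{[n]∖I_j} | X ∈ 𝒳^j) ≥ H_∞(X) - δ·b·|I_j| - log₂(1/p_{≥j}). -/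
open Finset
open scoped Classical
open Function

/-!
Greedy construction, with `c = δ b`. While points of `S` remain, choose `(I, x)` with `|I|` maximal
among the pairs whose fiber `{z ∈ S | z_I = x_I}` carries at least a `2 ^ (-c |I|)` fraction of the
weight of `S` (`I = ∅` always qualifies), split that fiber off as the next part and recurse on the
rest. Maximality makes the part dense outside `I`: a too heavy subfiber over `J` would glue to a
heavy fiber of `S` over `I ∪ J`. Since the part weighs at least `2 ^ (-c |I|) p_{≥ j}` and fixing
the coordinates outside `I` leaves at most one of its points, the min-entropy bound follows.
-/

namespace DensityRestoring

variable {ι Λ : Type*}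

noncomputable def fiber (S : Finset (ι → Λ)) (J : Finset ι) (x : ι → Λ) : Finset (ι → Λ) :=
  S.filter fun z => ∀ i ∈ J, z i = x i

@[simp]
lemma fiber_empty (S : Finset (ι → Λ)) (x : ι → Λ) : fiber S ∅ x = S := by
  simp [fiber]

lemma fiber_subset (S : Finset (ι → Λ)) (J : Finset ι) (x : ι → Λ) : fiber S J x ⊆ S :=
  filter_subset _ _

lemma fiber_fiber (S : Finset (ι → Λ)) {I J : Finset ι} (hJI : Disjoint J I) (x y : ι → Λ) :
    fiber (fiber S I x) J y = fiber S (I ∪ J) (I.piecewise x y) := by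
  ext z
  simp only [fiber, mem_filter, mem_union, and_assoc]
  refine and_congr_right fun _ => ⟨fun ⟨hI, hJ⟩ i hi => ?_, fun h => ⟨fun i hi => ?_, fun i hi => ?_⟩⟩
  · rcases hi with hi | hi
    · simp [hi, hI i hi]
    · simp [disjoint_left.1 hJI hi, hJ i hi]
  · simpa [hi] using h i (Or.inl hi)
  · simpa [disjoint_left.1 hJI hi] using h i (Or.inr hi)

variable (μ : (ι → Λ) → ℝ) (c : ℝ)

/-- With `c = δ b`, this is `δ`-density of `Z` restricted to the coordinates outside `I`, where `Z`
is distributed on `S` proportionally to `μ`. -/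
def IsDenseOutside (S : Finset (ι → Λ)) (I : Finset ι) : Prop :=
  ∀ J, Disjoint J I → ∀ x, ∑ z ∈ fiber S J x, μ z ≤ 2 ^ (-(c * #J)) * ∑ z ∈ S, μ z

def IsHeavyFiber (S : Finset (ι → Λ)) (I : Finset ι) (x : ι → Λ) : Prop :=
  (fiber S I x).Nonempty ∧ 2 ^ (-(c * #I)) * ∑ z ∈ S, μ z ≤ ∑ z ∈ fiber S I x, μ z

variable {μ c}

lemma isDenseOutside_of_maximal {S : Finset (ι → Λ)} (hμ : ∀ z ∈ S, 0 ≤ μ z) {I : Finset ι}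
    {x : ι → Λ} (hI : IsHeavyFiber μ c S I x)
    (hmax : ∀ J y, IsHeavyFiber μ c S J y → #J ≤ #I) :
    IsDenseOutside μ c (fiber S I x) I := by
  intro J hJI y
  by_contra! hlt
  have hJ : J.Nonempty := by
    rw [nonempty_iff_ne_empty]
    rintro rfl
    simp at hlt
  have hPnn : 0 ≤ ∑ z ∈ fiber S I x, μ z :=
    sum_nonneg fun z hz => hμ z (fiber_subset _ _ _ hz)
  have hheavy : IsHeavyFiber μ c S (I ∪ J) (I.piecewise x y) := by
    rw [IsHeavyFiber, ← fiber_fiber S hJI]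
    refine ⟨nonempty_of_sum_ne_zero ((mul_nonneg (by positivity) hPnn).trans_lt hlt).ne', ?_⟩
    calc 2 ^ (-(c * #(I ∪ J))) * ∑ z ∈ S, μ z
        = 2 ^ (-(c * #J)) * (2 ^ (-(c * #I)) * ∑ z ∈ S, μ z) := by
          rw [card_union_of_disjoint hJI.symm, ← mul_assoc, ← Real.rpow_add two_pos]
          push_cast; ring_nf
      _ ≤ 2 ^ (-(c * #J)) * ∑ z ∈ fiber S I x, μ z := by gcongr; exact hI.2
      _ ≤ ∑ z ∈ fiber (fiber S I x) J y, μ z := hlt.le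
  have hle := hmax _ _ hheavy
  rw [card_union_of_disjoint hJI.symm] at hle
  have hJpos := hJ.card_pos
  omega

lemma exists_isHeavyFiber_isDenseOutside [Finite ι] [Finite Λ] {S : Finset (ι → Λ)}
    (hμ : ∀ z ∈ S, 0 ≤ μ z) (hS : S.Nonempty) :
    ∃ I x, IsHeavyFiber μ c S I x ∧ IsDenseOutside μ c (fiber S I x) I := by
  obtain ⟨z₀, hz₀⟩ := hS
  have htriv : IsHeavyFiber μ c S ∅ z₀ := ⟨by simpa using ⟨z₀, hz₀⟩, by simp⟩
  obtain ⟨⟨I, x⟩, hI, hmax⟩ := Set.exists_max_image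
    {p : Finset ι × (ι → Λ) | IsHeavyFiber μ c S p.1 p.2} (fun p => #p.1) (Set.toFinite _)
    ⟨(∅, z₀), htriv⟩
  exact ⟨I, x, hI, isDenseOutside_of_maximal hμ hI fun J y h => hmax (J, y) h⟩

/-- The parts are listed in the order of the greedy construction, so `∑ j' ≥ j` in `sum_Ici_le` is
the weight `p_{≥ j}` still left when `parts j` is split off. -/
structure IsDensityRestoringPartition (μ : (ι → Λ) → ℝ) (c : ℝ) (S : Finset (ι → Λ)) {ℓ : ℕ}
    (parts : Fin ℓ → Finset (ι → Λ)) (I : Fin ℓ → Finset ι) (x : Fin ℓ → ι → Λ) : Prop where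
  pairwise_disjoint : Pairwise (Disjoint on parts)
  mem_iff : ∀ z, z ∈ S ↔ ∃ j, z ∈ parts j
  nonempty : ∀ j, (parts j).Nonempty
  eq_on : ∀ j, ∀ z ∈ parts j, ∀ i ∈ I j, z i = x j i
  isDenseOutside : ∀ j, IsDenseOutside μ c (parts j) (I j)
  sum_Ici_le : ∀ j, 2 ^ (-(c * #(I j))) * ∑ j' ≥ j, ∑ z ∈ parts j', μ z ≤ ∑ z ∈ parts j, μ z

namespace IsDensityRestoringPartition

variable {S : Finset (ι → Λ)} {ℓ : ℕ} {parts : Fin ℓ → Finset (ι → Λ)} {I : Fin ℓ → Finset ι}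
  {x : Fin ℓ → ι → Λ}

lemma subset (h : IsDensityRestoringPartition μ c S parts I x) (j : Fin ℓ) : parts j ⊆ S :=
  fun z hz => (h.mem_iff z).2 ⟨j, hz⟩

lemma sum_parts (h : IsDensityRestoringPartition μ c S parts I x) :
    ∑ j, ∑ z ∈ parts j, μ z = ∑ z ∈ S, μ z := by
  have hS : S = univ.biUnion parts := by ext z; simp [h.mem_iff z]
  rw [hS, sum_biUnion (h.pairwise_disjoint.set_pairwise _)]

lemma of_empty : IsDensityRestoringPartition μ c ∅ (Fin.elim0 : Fin 0 → Finset (ι → Λ))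
    Fin.elim0 Fin.elim0 where
  pairwise_disjoint := fun j => j.elim0
  mem_iff := by simp
  nonempty := fun j => j.elim0
  eq_on := fun j => j.elim0
  isDenseOutside := fun j => j.elim0
  sum_Ici_le := fun j => j.elim0

lemma cons {J : Finset ι} {y : ι → Λ} (hheavy : IsHeavyFiber μ c S J y)
    (hdense : IsDenseOutside μ c (fiber S J y) J)
    (h : IsDensityRestoringPartition μ c (S \ fiber S J y) parts I x) :
    IsDensityRestoringPartition μ c S (Fin.cons (fiber S J y) parts) (Fin.cons J I)
      (Fin.cons y x) where
  pairwise_disjoint := by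
    have hP : ∀ j, Disjoint (fiber S J y) (parts j) := fun j =>
      disjoint_sdiff.mono_right (h.subset j)
    refine pairwise_fin_succ_iff.2 ⟨fun j => ?_, fun j => ?_, fun j j' hjj' => ?_⟩
    · simpa [onFun] using (hP j).symm
    · simpa [onFun] using hP j
    · simpa [onFun] using h.pairwise_disjoint hjj'
  mem_iff z := by
    rw [Fin.exists_fin_succ]
    simp only [Fin.cons_zero, Fin.cons_succ, ← h.mem_iff, mem_sdiff]
    by_cases hz : z ∈ fiber S J y
    · simp [hz, fiber_subset S J y hz]
    · simp [hz]
  nonempty := Fin.cases hheavy.1 h.nonempty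
  eq_on := Fin.cases (fun z hz => (mem_filter.1 hz).2) h.eq_on
  isDenseOutside := Fin.cases hdense h.isDenseOutside
  sum_Ici_le := by
    refine Fin.cases ?_ fun j => ?_
    · have hsplit := hheavy.2
      rw [← sum_sdiff (fiber_subset S J y), add_comm] at hsplit
      simpa [Fin.sum_univ_succ, h.sum_parts] using hsplit
    · simpa [Fin.sum_Ici_succ] using h.sum_Ici_le j

lemma sum_pos (h : IsDensityRestoringPartition μ c S parts I x) (hS : ∀ z ∈ S, 0 < μ z)
    (j : Fin ℓ) : 0 < ∑ z ∈ parts j, μ z :=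
  Finset.sum_pos (fun z hz => hS z (h.subset j hz)) (h.nonempty j)

lemma sum_fiber_div_le (h : IsDensityRestoringPartition μ c S parts I x)
    (hS : ∀ z ∈ S, 0 < μ z) (j : Fin ℓ) {J : Finset ι} (hJ : Disjoint J (I j)) (y : ι → Λ) :
    (∑ z ∈ fiber (parts j) J y, μ z) / ∑ z ∈ parts j, μ z ≤ 2 ^ (-(c * #J)) :=
  (div_le_iff₀ (h.sum_pos hS j)).2 (h.isDenseOutside j J hJ y)

lemma sum_filter_compl_div_le (h : IsDensityRestoringPartition μ c S parts I x)
    (hS : ∀ z ∈ S, 0 < μ z) {k : ℝ} (hk : ∀ z, μ z ≤ 2 ^ (-k)) (j : Fin ℓ) (y : ι → Λ) :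
    (∑ z ∈ (parts j).filter (fun z => ∀ i ∉ I j, z i = y i), μ z) / ∑ z ∈ parts j, μ z
      ≤ 2 ^ (-(k - c * #(I j)
          - Real.logb 2 (1 / ∑ j' ∈ univ.filter (fun j' => j ≤ j'), ∑ z ∈ parts j', μ z))) := by
  rw [filter_le_eq_Ici]
  set p := ∑ j' ≥ j, ∑ z ∈ parts j', μ z
  have hp : 0 < p := (h.sum_pos hS j).trans_le
    (single_le_sum (fun j' _ => (h.sum_pos hS j').le) (mem_Ici.2 le_rfl))
  have hsingle : #((parts j).filter fun z => ∀ i ∉ I j, z i = y i) ≤ 1 :=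
    card_le_one.2 fun z hz w hw => funext fun i => by
      rw [mem_filter] at hz hw
      by_cases hi : i ∈ I j
      · rw [h.eq_on j z hz.1 i hi, h.eq_on j w hw.1 i hi]
      · rw [hz.2 i hi, hw.2 i hi]
  have hnum : ∑ z ∈ (parts j).filter (fun z => ∀ i ∉ I j, z i = y i), μ z ≤ 2 ^ (-k) :=
    calc _ ≤ #((parts j).filter fun z => ∀ i ∉ I j, z i = y i) • (2 : ℝ) ^ (-k) :=
          sum_le_card_nsmul _ _ _ fun z _ => hk z
      _ ≤ 1 • (2 : ℝ) ^ (-k) := by gcongr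
      _ = 2 ^ (-k) := one_smul _ _
  calc _ ≤ 2 ^ (-k) / (2 ^ (-(c * #(I j))) * p) :=
        div_le_div₀ (by positivity) hnum (by positivity) (h.sum_Ici_le j)
    _ = _ := by
      rw [show -(k - c * #(I j) - Real.logb 2 (1 / p)) = -k - -(c * #(I j)) + Real.logb 2 (1 / p)
        by ring, Real.rpow_add two_pos, Real.rpow_sub two_pos,
        Real.rpow_logb two_pos (by norm_num) (by positivity)]
      field_simp

end IsDensityRestoringPartition

theorem exists_isDensityRestoringPartition [Finite ι] [Finite Λ] (S : Finset (ι → Λ))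
    (hμ : ∀ z ∈ S, 0 ≤ μ z) :
    ∃ (ℓ : ℕ) (parts : Fin ℓ → Finset (ι → Λ)) (I : Fin ℓ → Finset ι) (x : Fin ℓ → ι → Λ),
      IsDensityRestoringPartition μ c S parts I x := by
  induction S using Finset.strongInduction with
  | H S ih =>
    rcases S.eq_empty_or_nonempty with rfl | hS
    · exact ⟨0, _, _, _, .of_empty⟩
    obtain ⟨J, y, hheavy, hdense⟩ := exists_isHeavyFiber_isDenseOutside hμ hS
    obtain ⟨ℓ, parts, I, x, h⟩ := ih (S \ fiber S J y)
      (sdiff_ssubset (fiber_subset S J y) hheavy.1) fun z hz => hμ z (mem_sdiff.1 hz).1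
    exact ⟨ℓ + 1, _, _, _, h.cons hheavy hdense⟩

end DensityRestoring

open DensityRestoring in
theorem stmt_10_general (n b : ℕ) {Λ : Type*} [Fintype Λ] [DecidableEq Λ]
    (μ : (Fin n → Λ) → ℝ) (δ : ℝ) :
    ∃ (ℓ : ℕ) (parts : Fin ℓ → Finset (Fin n → Λ)) (I : Fin ℓ → Finset (Fin n))
      (xv : Fin ℓ → Fin n → Λ),
      (∀ j j', j ≠ j' → Disjoint (parts j) (parts j')) ∧
      (∀ z, 0 < μ z ↔ ∃ j, z ∈ parts j) ∧
      (∀ j, ∀ z ∈ parts j, ∀ i ∈ I j, z i = xv j i) ∧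
      (∀ j, ∀ J : Finset (Fin n), Disjoint J (I j) → ∀ x : Fin n → Λ,
        (∑ z ∈ (parts j).filter (fun z => ∀ i ∈ J, z i = x i), μ z)
            / (∑ z ∈ parts j, μ z)
          ≤ (2 : ℝ) ^ (-(δ * b * J.card))) ∧
      (∀ j, ∀ k : ℝ, (∀ z, μ z ≤ (2 : ℝ) ^ (-k)) → ∀ x : Fin n → Λ,
        (∑ z ∈ (parts j).filter (fun z => ∀ i ∉ I j, z i = x i), μ z)
            / (∑ z ∈ parts j, μ z)
          ≤ (2 : ℝ) ^ (-(k - δ * b * (I j).card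
              - Real.logb 2
                  (1 / ∑ j' ∈ univ.filter (fun j' => j ≤ j'), ∑ z ∈ parts j', μ z)))) := by
  have hpos : ∀ z ∈ univ.filter (fun z => 0 < μ z), 0 < μ z := fun z hz => (mem_filter.1 hz).2
  obtain ⟨ℓ, parts, I, xv, h⟩ := exists_isDensityRestoringPartition (c := δ * b)
    (univ.filter fun z => 0 < μ z) fun z hz => (hpos z hz).le
  refine ⟨ℓ, parts, I, xv, fun j j' hjj' => h.pairwise_disjoint hjj', fun z => ?_, h.eq_on,
    fun j J hJ x => by convert h.sum_fiber_div_le hpos j hJ x using 3; unfold fiber; congr!,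
    fun j k hk x => by convert h.sum_filter_compl_div_le hpos hk j x⟩
  simpa using h.mem_iff z

/-- Density-restoring partition: the support of `X` can be partitioned into classes, each fixing
some coordinates `I_j` to a value `x_j`, being `δ`-dense on the remaining coordinates, and losing
min-entropy at most `δ·b·|I_j| + log₂(1/p_{≥j})`. -/
theorem stmt_10 (n b : ℕ) {Λ : Type*} [Fintype Λ] [DecidableEq Λ]
    (hcard : Fintype.card Λ = 2 ^ b)
    (μ : (Fin n → Λ) → ℝ) (hnn : ∀ z, 0 ≤ μ z) (hsum : ∑ z, μ z = 1)
    (δ : ℝ) (hδ : 0 < δ) :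
    ∃ (ℓ : ℕ) (parts : Fin ℓ → Finset (Fin n → Λ)) (I : Fin ℓ → Finset (Fin n))
      (xv : Fin ℓ → Fin n → Λ),
      (∀ j j', j ≠ j' → Disjoint (parts j) (parts j')) ∧
      (∀ z, 0 < μ z ↔ ∃ j, z ∈ parts j) ∧
      (∀ j, ∀ z ∈ parts j, ∀ i ∈ I j, z i = xv j i) ∧
      (∀ j, ∀ J : Finset (Fin n), Disjoint J (I j) → ∀ x : Fin n → Λ,
        (∑ z ∈ (parts j).filter (fun z => ∀ i ∈ J, z i = x i), μ z)
            / (∑ z ∈ parts j, μ z)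
          ≤ (2 : ℝ) ^ (-(δ * b * J.card))) ∧
      (∀ j, ∀ k : ℝ, (∀ z, μ z ≤ (2 : ℝ) ^ (-k)) → ∀ x : Fin n → Λ,
        (∑ z ∈ (parts j).filter (fun z => ∀ i ∉ I j, z i = x i), μ z)
            / (∑ z ∈ parts j, μ z)
          ≤ (2 : ℝ) ^ (-(k - δ * b * (I j).card
              - Real.logb 2
                  (1 / ∑ j' ∈ univ.filter (fun j' => j ≤ j'), ∑ z ∈ parts j', μ z)))) :=
  stmt_10_general n b μ δ
end

section
/- (Skewing from dangerous, via Bayes) Let Y be a δ_Y-dense random variable over Λ^n (|Λ|=2^b) and let x ∈ Λ^n be ε-sparsifying but not leaking for Y. Then x is ε-skewing: there exist disjoint non-empty sets I, J ⊆ [n] and y_J ∈ Λ^J such that H_∞(g^I(x_I, Y_I) | Y_J = y_J) < |I| - ε·b·|J| - e_{y_J} + 1, where e_{y_J} ≥ 0 is defined by Pr[Y_J = y_J] = 2^{-δ_Y·b·|J| - e_{y_J}}. -/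
/-!
Bayes' rule: `Pr[z_I | y_J] = Pr[y_J | z_I] · Pr[z_I] / Pr[y_J]`. Sparsification bounds
`Pr[y_J | z_I]` below by `2^{-(δ_Y - ε)·b·|J|}`, non-leakage bounds `Pr[z_I]` below by
`2^{-|I|-1}`, and `Pr[y_J] = 2^{-δ_Y·b·|J| - e_{y_J}}` by the definition of `e_{y_J}`.
The sets are non-empty because for `J = ∅` the conditional probability cannot exceed `1`, and
for `I = ∅` density forbids sparsification.
-/

open Finset

section Weights

variable {Ω : Type*} [Fintype Ω] {μ : Ω → ℝ}

lemma sum_filter_le_sum_filter_of_imp (hμ : ∀ w, 0 ≤ μ w) {p q : Ω → Prop}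
    [DecidablePred p] [DecidablePred q] (h : ∀ w, p w → q w) :
    ∑ w ∈ univ.filter p, μ w ≤ ∑ w ∈ univ.filter q, μ w :=
  sum_le_sum_of_subset_of_nonneg (monotone_filter_right _ fun w _ => h w) fun w _ _ => hμ w

lemma sum_filter_and_comm (p q : Ω → Prop) [DecidablePred p] [DecidablePred q] :
    ∑ w ∈ univ.filter (fun w => p w ∧ q w), μ w =
      ∑ w ∈ univ.filter (fun w => q w ∧ p w), μ w := by
  simp only [and_comm]

end Weights

lemma mul_lt_of_le_of_lt_div {a A r B : ℝ} (ha : 0 < a) (hr : 0 ≤ r) (hA : a ≤ A)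
    (h : r < B / A) : a * r < B := by
  have hA₀ : 0 < A := ha.trans_le hA
  calc a * r ≤ A * r := mul_le_mul_of_nonneg_right hA hr
    _ < B := by rwa [mul_comm, ← lt_div_iff₀ hA₀]

lemma Finset.nonempty_of_rpow_neg_mul_card_lt {ι : Type*} {s : Finset ι} {c r : ℝ}
    (h : (2 : ℝ) ^ (-(c * #s)) < r) (hr : r ≤ 1) : s.Nonempty := by
  rw [nonempty_iff_ne_empty]
  rintro rfl
  simp only [card_empty, Nat.cast_zero, mul_zero, neg_zero, Real.rpow_zero] at h
  linarith

lemma Real.rpow_neg_mul_mul_le_rpow_neg_sub_mul_mul {x δ ε c k : ℝ} (hx : 1 ≤ x)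
    (hε : 0 ≤ ε) (hc : 0 ≤ c) (hk : 0 ≤ k) : x ^ (-(δ * c * k)) ≤ x ^ (-((δ - ε) * c * k)) :=
  rpow_le_rpow_of_exponent_le hx (by nlinarith [mul_nonneg (mul_nonneg hε hc) hk])

lemma Real.rpow_neg_sub_logb_one_div {b C : ℝ} (hb : 0 < b) (hb₁ : b ≠ 1) (hC : 0 < C)
    (t : ℝ) : b ^ (-(t - logb b (1 / C))) = b ^ (-t) / C := by
  rw [neg_sub', rpow_sub hb, one_div, logb_inv, neg_neg, rpow_logb hb hb₁ hC]

open scoped Classical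

theorem stmt_12_general (n b : ℕ) {Λ : Type*} [Fintype Λ] [DecidableEq Λ]
    (g : Λ → Λ → Bool)
    (μ : (Fin n → Λ) → ℝ) (hnn : ∀ z, 0 ≤ μ z) (hsum : ∑ z, μ z = 1)
    (δY ε : ℝ) (hε : 0 < ε)
    -- `Y` is `δY`-dense
    (hdense : ∀ J : Finset (Fin n), ∀ y : Fin n → Λ,
      ∑ w ∈ univ.filter (fun w => ∀ i ∈ J, w i = y i), μ w
        ≤ (2 : ℝ) ^ (-(δY * b * J.card)))
    (x : Fin n → Λ)
    -- `x` is not leaking for `Y`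
    (hnl : ∀ I : Finset (Fin n), ∀ zI : Fin n → Bool,
      (2 : ℝ) ^ (-(I.card : ℝ) - 1)
        ≤ ∑ w ∈ univ.filter (fun w => ∀ i ∈ I, g (x i) (w i) = zI i), μ w)
    -- `x` is `ε`-sparsifying for `Y`
    (hsp : ∃ I : Finset (Fin n), ∃ zI : Fin n → Bool, ∃ J : Finset (Fin n), Disjoint J I ∧
      ∃ yJ : Fin n → Λ,
        (2 : ℝ) ^ (-((δY - ε) * b * J.card))
          < (∑ w ∈ univ.filter
                (fun w => (∀ i ∈ J, w i = yJ i) ∧ ∀ i ∈ I, g (x i) (w i) = zI i), μ w)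
              / (∑ w ∈ univ.filter (fun w => ∀ i ∈ I, g (x i) (w i) = zI i), μ w)) :
    -- `x` is `ε`-skewing
    ∃ I J : Finset (Fin n), Disjoint I J ∧ I.Nonempty ∧ J.Nonempty ∧
      ∃ yJ : Fin n → Λ, ∃ zI : Fin n → Bool,
        (2 : ℝ) ^ (-((I.card : ℝ) - ε * b * J.card
              - (Real.logb 2 (1 / ∑ w ∈ univ.filter (fun w => ∀ i ∈ J, w i = yJ i), μ w)
                  - δY * b * J.card) + 1))
          < (∑ w ∈ univ.filter
                (fun w => (∀ i ∈ I, g (x i) (w i) = zI i) ∧ ∀ i ∈ J, w i = yJ i), μ w)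
              / (∑ w ∈ univ.filter (fun w => ∀ i ∈ J, w i = yJ i), μ w) := by
  obtain ⟨I, zI, J, hJI, yJ, hsparse⟩ := hsp
  set A := ∑ w ∈ univ.filter (fun w => ∀ i ∈ I, g (x i) (w i) = zI i), μ w
  set B := ∑ w ∈ univ.filter
    (fun w => (∀ i ∈ I, g (x i) (w i) = zI i) ∧ ∀ i ∈ J, w i = yJ i), μ w
  set C := ∑ w ∈ univ.filter (fun w => ∀ i ∈ J, w i = yJ i), μ w
  rw [sum_filter_and_comm] at hsparse
  have hA : (2 : ℝ) ^ (-(#I : ℝ) - 1) ≤ A := hnl I zI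
  have hB : (2 : ℝ) ^ (-(#I : ℝ) - 1) * 2 ^ (-((δY - ε) * b * #J)) < B :=
    mul_lt_of_le_of_lt_div (by positivity) (by positivity) hA hsparse
  have hC : 0 < C := (hB.trans_le (sum_filter_le_sum_filter_of_imp hnn fun _ => And.right))
    |>.trans_le' (by positivity)
  have hJ : J.Nonempty := nonempty_of_rpow_neg_mul_card_lt hsparse
    (div_le_one_of_le₀ (sum_filter_le_sum_filter_of_imp hnn fun _ => And.left)
      (sum_nonneg fun w _ => hnn w))
  have hI : I.Nonempty := by
    rw [nonempty_iff_ne_empty]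
    rintro rfl
    have hsparse_C : (2 : ℝ) ^ (-((δY - ε) * b * #J)) < C := by simpa [A, B, hsum] using hsparse
    have hdense_C := (hdense J yJ).trans <| Real.rpow_neg_mul_mul_le_rpow_neg_sub_mul_mul
      (by norm_num) hε.le b.cast_nonneg (#J).cast_nonneg
    exact hsparse_C.not_ge hdense_C
  refine ⟨I, J, hJI.symm, hI, hJ, yJ, zI, ?_⟩
  rw [show (#I : ℝ) - ε * b * #J - (Real.logb 2 (1 / C) - δY * b * #J) + 1
      = #I + 1 + (δY - ε) * b * #J - Real.logb 2 (1 / C) by ring,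
    Real.rpow_neg_sub_logb_one_div (by norm_num) (by norm_num) hC, div_lt_div_iff_of_pos_right hC,
    neg_add, Real.rpow_add (by norm_num), neg_add']
  exact hB

/-- Skewing from dangerous, via Bayes: if `Y` is `δY`-dense and `x` is `ε`-sparsifying but not
leaking for `Y`, then `x` is `ε`-skewing: for some disjoint non-empty `I, J` and `y_J`,
`H_∞(g^I(x_I,Y_I) | Y_J = y_J) < |I| - ε·b·|J| - e_{y_J} + 1`, where
`e_{y_J} = log₂(1/Pr[Y_J = y_J]) - δY·b·|J|`. -/
theorem stmt_12 (n b : ℕ) {Λ : Type*} [Fintype Λ] [DecidableEq Λ]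
    (hcard : Fintype.card Λ = 2 ^ b)
    (g : Λ → Λ → Bool)
    (μ : (Fin n → Λ) → ℝ) (hnn : ∀ z, 0 ≤ μ z) (hsum : ∑ z, μ z = 1)
    (δY ε : ℝ) (hε : 0 < ε)
    -- `Y` is `δY`-dense
    (hdense : ∀ J : Finset (Fin n), ∀ y : Fin n → Λ,
      ∑ w ∈ univ.filter (fun w => ∀ i ∈ J, w i = y i), μ w
        ≤ (2 : ℝ) ^ (-(δY * b * J.card)))
    (x : Fin n → Λ)
    -- `x` is not leaking for `Y`
    (hnl : ∀ I : Finset (Fin n), ∀ zI : Fin n → Bool,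
      (2 : ℝ) ^ (-(I.card : ℝ) - 1)
        ≤ ∑ w ∈ univ.filter (fun w => ∀ i ∈ I, g (x i) (w i) = zI i), μ w)
    -- `x` is `ε`-sparsifying for `Y`
    (hsp : ∃ I : Finset (Fin n), ∃ zI : Fin n → Bool, ∃ J : Finset (Fin n), Disjoint J I ∧
      ∃ yJ : Fin n → Λ,
        (2 : ℝ) ^ (-((δY - ε) * b * J.card))
          < (∑ w ∈ univ.filter
                (fun w => (∀ i ∈ J, w i = yJ i) ∧ ∀ i ∈ I, g (x i) (w i) = zI i), μ w)
              / (∑ w ∈ univ.filter (fun w => ∀ i ∈ I, g (x i) (w i) = zI i), μ w)) :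
    -- `x` is `ε`-skewing
    ∃ I J : Finset (Fin n), Disjoint I J ∧ I.Nonempty ∧ J.Nonempty ∧
      ∃ yJ : Fin n → Λ, ∃ zI : Fin n → Bool,
        (2 : ℝ) ^ (-((I.card : ℝ) - ε * b * J.card
              - (Real.logb 2 (1 / ∑ w ∈ univ.filter (fun w => ∀ i ∈ J, w i = yJ i), μ w)
                  - δY * b * J.card) + 1))
          < (∑ w ∈ univ.filter
                (fun w => (∀ i ∈ I, g (x i) (w i) = zI i) ∧ ∀ i ∈ J, w i = yJ i), μ w)
              / (∑ w ∈ univ.filter (fun w => ∀ i ∈ J, w i = yJ i), μ w) :=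
  stmt_12_general n b g μ hnn hsum δY ε hε hdense x hnl hsp
end
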